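/- arXiv:1604.07128 — 5 statements merged into one kernel-verified Lean document; each statement's English description precedes it below -/
import Mathlib

section
/- If G is the join of two graphs G1 and G2, then the Grundy number of G equals the sum of the Grundy numbers of G1 and G2. -/
open SimpleGraph

/-- A first-fit (greedy/Grundy) coloring: a proper coloring by naturals such that every
vertex with color `j` has a neighbor of each color `i < j`. -/
def IsGrundyColoring {V : Type*} (G : SimpleGraph V) (f : V → ℕ) : Prop :=
  (∀ u v : V, G.Adj u v → f u ≠ f v) ∧
  ∀ v : V, ∀ i < f v, ∃ u : V, G.Adj v u ∧ f u = i

/-- The Grundy number: the maximum number of colors used by a first-fit coloring. -/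
noncomputable def grundy {V : Type*} [Fintype V] (G : SimpleGraph V) : ℕ :=
  sSup {k | ∃ f : V → ℕ, IsGrundyColoring G f ∧ k = (Finset.univ.image f).card}

/-- The join of two graphs: their disjoint union plus all edges between the parts. -/
def SimpleGraph.join {α β : Type*} (G : SimpleGraph α) (H : SimpleGraph β) :
    SimpleGraph (α ⊕ β) where
  Adj u v := match u, v with
    | Sum.inl u, Sum.inl v => G.Adj u v
    | Sum.inr u, Sum.inr v => H.Adj u v
    | _, _ => True
  symm := ⟨fun u v => match u, v with
    | Sum.inl u, Sum.inl v => G.adj_symm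
    | Sum.inr u, Sum.inr v => H.adj_symm
    | Sum.inl _, Sum.inr _ | Sum.inr _, Sum.inl _ => fun _ => trivial⟩
  loopless := ⟨fun u => by cases u <;> simp⟩

/-- `H` occurs as an induced subgraph of `G`. -/
def HasInduced {V W : Type*} (G : SimpleGraph V) (H : SimpleGraph W) : Prop :=
  ∃ f : W ↪ V, ∀ a b : W, G.Adj (f a) (f b) ↔ H.Adj a b

/-- A cograph is a graph without induced `P₄`. -/
def IsCograph {V : Type*} (G : SimpleGraph V) : Prop :=
  ¬ HasInduced G (pathGraph 4)

/-- Seidel switching with respect to a vertex set `S`: adjacencies between `S` and its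
complement are complemented, other adjacencies are unchanged. -/
def seidelSwitch {V : Type*} (G : SimpleGraph V) (S : Set V) : SimpleGraph V where
  Adj x y := x ≠ y ∧ (G.Adj x y ↔ ((x ∈ S) ↔ (y ∈ S)))
  symm := ⟨by
    rintro x y ⟨h1, h2⟩
    refine ⟨h1.symm, ?_⟩
    rw [G.adj_comm] at h2
    tauto⟩
  loopless := ⟨fun x h => h.1 rfl⟩

/-- A Cameron graph: obtained from some cograph by some Seidel switch. -/
def IsCameron {V : Type*} (G : SimpleGraph V) : Prop :=
  ∃ (S : Set V) (H : SimpleGraph V), IsCograph H ∧ G = seidelSwitch H S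

open scoped Classical in
/-- The number of edges of `G` among the three pairs from `{x, y, z}`. -/
noncomputable def edgeCount {V : Type*} (G : SimpleGraph V) (x y z : V) : ℕ :=
  (if G.Adj x y then 1 else 0) + (if G.Adj x z then 1 else 0) + (if G.Adj y z then 1 else 0)

/-- A triple of (distinct) vertices is odd if it spans an odd number of edges. -/
def OddTriple {V : Type*} (G : SimpleGraph V) (x y z : V) : Prop :=
  Odd (edgeCount G x y z)

/-- `C` is an independent set of `G`. -/
def IsIndepOn {V : Type*} (G : SimpleGraph V) (C : Set V) : Prop :=
  ∀ u ∈ C, ∀ v ∈ C, ¬ G.Adj u v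

/-- `C` is a maximal independent set of the subgraph of `G` induced by `W`. -/
def IsMaxIndepOn {V : Type*} (G : SimpleGraph V) (W C : Set V) : Prop :=
  C ⊆ W ∧ IsIndepOn G C ∧ ∀ D, C ⊆ D → D ⊆ W → IsIndepOn G D → D = C

/-- `C` is a maximal clique of the subgraph of `G` induced by `W`. -/
def IsMaxCliqueOn {V : Type*} (G : SimpleGraph V) (W C : Set V) : Prop :=
  C ⊆ W ∧ G.IsClique C ∧ ∀ D, C ⊆ D → D ⊆ W → G.IsClique D → D = C

/-- `x` and `y` are twins within `W`: every other vertex of `W` is adjacent to both or neither. -/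
def TwinsOn {V : Type*} (G : SimpleGraph V) (W : Set V) (x y : V) : Prop :=
  ∀ z ∈ W, z ≠ x → z ≠ y → (G.Adj x z ↔ G.Adj y z)

/-- `x` and `y` are anti-twins within `W`: every other vertex of `W` is adjacent to
exactly one of them. -/
def AntiTwinsOn {V : Type*} (G : SimpleGraph V) (W : Set V) (x y : V) : Prop :=
  ∀ z ∈ W, z ≠ x → z ≠ y → (G.Adj x z ↔ ¬ G.Adj y z)

/-- The bull graph. -/
def bull : SimpleGraph (Fin 5) :=
  SimpleGraph.fromRel fun i j => (i.val, j.val) ∈ [(0,1),(0,2),(1,2),(0,3),(1,4)]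

/-- The gem graph: `P₄` plus a dominating vertex. -/
def gem : SimpleGraph (Fin 5) :=
  SimpleGraph.fromRel fun i j => (i.val, j.val) ∈ [(0,1),(1,2),(2,3),(4,0),(4,1),(4,2),(4,3)]


/-!
Colors used on `G1` and on `G2` in a first-fit coloring of the join are disjoint, since every
vertex of `G1` is adjacent to every vertex of `G2`. Hence each side's color set is a union of
color classes, and after order-preserving relabeling the coloring restricts to a first-fit
coloring of that side; this gives `≤`. Conversely, shifting an optimal coloring of `G2` above
the `grundy G1` colors of an optimal coloring of `G1` gives a first-fit coloring of the join.
-/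

open Finset

section Grundy

variable {V : Type*} {G : SimpleGraph V} {f : V → ℕ}

theorem IsGrundyColoring.image_eq_range [Fintype V] (hf : IsGrundyColoring G f) :
    univ.image f = range #(univ.image f) := by
  refine eq_of_subset_of_card_le (fun c hc => ?_) (by rw [card_range])
  obtain ⟨v, -, rfl⟩ := mem_image.1 hc
  have hbelow : range (f v + 1) ⊆ univ.image f := fun i hi => by
    rcases (Nat.lt_succ_iff.1 (mem_range.1 hi)).lt_or_eq with hlt | rfl
    · obtain ⟨u, -, rfl⟩ := hf.2 v i hlt
      exact mem_image_of_mem f (mem_univ u)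
    · exact mem_image_of_mem f (mem_univ v)
  simpa using card_le_card hbelow

theorem IsGrundyColoring.mem_image_iff [Fintype V] (hf : IsGrundyColoring G f) {i : ℕ} :
    i ∈ univ.image f ↔ i < #(univ.image f) := by
  rw [← mem_range, ← hf.image_eq_range]

/-- A proper coloring of minimal total weight `∑ v, f v` is first-fit: a vertex missing a
smaller color among its neighbors could be recolored with it. -/
theorem exists_isGrundyColoring [Fintype V] (G : SimpleGraph V) :
    ∃ f : V → ℕ, IsGrundyColoring G f := by
  classical
  have hex : ∃ n, ∃ f : V → ℕ, (∀ u v, G.Adj u v → f u ≠ f v) ∧ ∑ v, f v = n :=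
    ⟨_, fun v => Fintype.equivFin V v, fun u v huv he => huv.ne (by simpa [Fin.val_inj] using he),
      rfl⟩
  obtain ⟨f, hproper, hsum⟩ := Nat.find_spec hex
  refine ⟨f, hproper, fun v i hi => ?_⟩
  by_contra! hfree
  have hproper' : ∀ u w, G.Adj u w → Function.update f v i u ≠ Function.update f v i w := by
    intro u w huw
    rcases eq_or_ne u v with rfl | hu
    · simpa [huw.ne'] using (hfree w huw).symm
    rcases eq_or_ne w v with rfl | hw
    · simpa [hu] using hfree u huw.symm
    · simpa [hu, hw] using hproper u w huw
  have hlt : ∑ w, Function.update f v i w < ∑ w, f w :=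
    sum_lt_sum (fun w _ => by rcases eq_or_ne w v with rfl | h <;> simp [*, hi.le])
      ⟨v, mem_univ v, by simpa using hi⟩
  exact Nat.find_min hex (hsum ▸ hlt) ⟨_, hproper', rfl⟩

theorem bddAbove_card_image_isGrundyColoring [Fintype V] (G : SimpleGraph V) :
    BddAbove {k | ∃ f : V → ℕ, IsGrundyColoring G f ∧ k = #(univ.image f)} :=
  ⟨Fintype.card V, by rintro _ ⟨f, -, rfl⟩; exact card_image_le.trans_eq card_univ⟩

theorem IsGrundyColoring.card_image_le_grundy [Fintype V] (hf : IsGrundyColoring G f) :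
    #(univ.image f) ≤ grundy G :=
  le_csSup (bddAbove_card_image_isGrundyColoring G) ⟨f, hf, rfl⟩

theorem grundy_le [Fintype V] {n : ℕ}
    (h : ∀ f : V → ℕ, IsGrundyColoring G f → #(univ.image f) ≤ n) : grundy G ≤ n :=
  csSup_le' (by rintro _ ⟨f, hf, rfl⟩; exact h f hf)

theorem exists_isGrundyColoring_card_image_eq_grundy [Fintype V] (G : SimpleGraph V) :
    ∃ f : V → ℕ, IsGrundyColoring G f ∧ #(univ.image f) = grundy G := by
  obtain ⟨f₀, hf₀⟩ := exists_isGrundyColoring G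
  obtain ⟨f, hf, h⟩ :
      grundy G ∈ {k | ∃ f : V → ℕ, IsGrundyColoring G f ∧ k = #(univ.image f)} :=
    Nat.sSup_mem ⟨_, f₀, hf₀, rfl⟩ (bddAbove_card_image_isGrundyColoring G)
  exact ⟨f, hf, h.symm⟩

/-- Relabeling the used colors in increasing order by `0, 1, 2, …` gives a first-fit coloring. -/
theorem card_image_le_grundy_of_adj_lower [Fintype V] (hproper : ∀ u v, G.Adj u v → f u ≠ f v)
    (hlower : ∀ u v, f u < f v → ∃ w, G.Adj v w ∧ f w = f u) :
    #(univ.image f) ≤ grundy G := by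
  set A := univ.image f
  let e : Fin #A ≃o A := A.orderIsoOfFin rfl
  have hA : ∀ v, f v ∈ A := fun v => mem_image_of_mem f (mem_univ v)
  let g : V → ℕ := fun v => e.symm ⟨f v, hA v⟩
  have hg : ∀ (i : Fin #A) v, f v = e i → g v = i := fun i v h => by
    simp only [g, show (⟨f v, hA v⟩ : A) = e i from Subtype.ext h, OrderIso.symm_apply_apply]
  have hgrundy : IsGrundyColoring G g := by
    refine ⟨fun u v huv he => hproper u v huv ?_, fun v i hi => ?_⟩
    · simpa using e.symm.injective (Fin.ext he)
    · let j : Fin #A := ⟨i, hi.trans (e.symm _).isLt⟩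
      have hj : (e j : ℕ) < f v := e.lt_symm_apply.1 (show j < e.symm ⟨f v, hA v⟩ from hi)
      obtain ⟨u, -, hu⟩ := mem_image.1 (e j).2
      obtain ⟨w, hvw, hw⟩ := hlower u v (hu ▸ hj)
      exact ⟨w, hvw, hg j w (hw.trans hu)⟩
  calc #A = #(range #A) := (card_range _).symm
    _ ≤ #(univ.image g) := card_le_card fun i hi => by
        obtain ⟨u, -, hu⟩ := mem_image.1 (e ⟨i, mem_range.1 hi⟩).2
        exact mem_image.2 ⟨u, mem_univ u, hg _ u hu⟩
    _ ≤ grundy G := hgrundy.card_image_le_grundy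

theorem IsGrundyColoring.card_image_comp_le_grundy {W : Type*} [Fintype W] {H : SimpleGraph W}
    (hf : IsGrundyColoring G f) (e : H ↪g G)
    (hclosed : ∀ v w, f v = f (e w) → v ∈ Set.range e) :
    #(univ.image (f ∘ e)) ≤ grundy H :=
  card_image_le_grundy_of_adj_lower (fun u v huv => hf.1 _ _ (e.map_adj_iff.2 huv))
    fun u v huv => by
      obtain ⟨w, hvw, hw⟩ := hf.2 (e v) _ huv
      obtain ⟨w, rfl⟩ := hclosed w u hw
      exact ⟨w, e.map_adj_iff.1 hvw, hw⟩

end Grundy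

section Join

variable {α β : Type*} {G1 : SimpleGraph α} {G2 : SimpleGraph β}

def SimpleGraph.Embedding.joinInl (G1 : SimpleGraph α) (G2 : SimpleGraph β) :
    G1 ↪g G1.join G2 :=
  ⟨Function.Embedding.inl, Iff.rfl⟩

def SimpleGraph.Embedding.joinInr (G1 : SimpleGraph α) (G2 : SimpleGraph β) :
    G2 ↪g G1.join G2 :=
  ⟨Function.Embedding.inr, Iff.rfl⟩

theorem grundy_join_le [Fintype α] [Fintype β] :
    grundy (G1.join G2) ≤ grundy G1 + grundy G2 := grundy_le fun f hf => by
  have h1 := hf.card_image_comp_le_grundy (Embedding.joinInl G1 G2) <| by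
    rintro (a | b) a' h
    exacts [⟨a, rfl⟩, absurd h (hf.1 _ _ trivial)]
  have h2 := hf.card_image_comp_le_grundy (Embedding.joinInr G1 G2) <| by
    rintro (a | b) b' h
    exacts [absurd h (hf.1 _ _ trivial), ⟨b, rfl⟩]
  calc #(univ.image f)
      ≤ #(univ.image (f ∘ Sum.inl) ∪ univ.image (f ∘ Sum.inr)) := card_le_card <| by
        rintro _ h
        obtain ⟨a | b, -, rfl⟩ := mem_image.1 h <;> simp
    _ ≤ _ := card_union_le _ _
    _ ≤ grundy G1 + grundy G2 := add_le_add h1 h2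

theorem IsGrundyColoring.join_sumElim [Fintype α] {f1 : α → ℕ} {f2 : β → ℕ}
    (hf1 : IsGrundyColoring G1 f1) (hf2 : IsGrundyColoring G2 f2) :
    IsGrundyColoring (G1.join G2) (Sum.elim f1 (#(univ.image f1) + f2 ·)) := by
  set k := #(univ.image f1)
  have hlt : ∀ a, f1 a < k := fun a => hf1.mem_image_iff.1 (mem_image_of_mem f1 (mem_univ a))
  refine ⟨?_, ?_⟩
  · rintro (a | b) (a' | b') h
    · exact hf1.1 a a' h
    · exact ((hlt a).trans_le (Nat.le_add_right _ _)).ne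
    · exact ((hlt a').trans_le (Nat.le_add_right _ _)).ne'
    · exact fun he => hf2.1 b b' h (Nat.add_left_cancel he)
  · rintro (a | b) i hi
    · obtain ⟨u, hu, rfl⟩ := hf1.2 a i hi
      exact ⟨Sum.inl u, hu, rfl⟩
    · rcases lt_or_ge i k with h | h
      · obtain ⟨a, -, rfl⟩ := mem_image.1 (hf1.mem_image_iff.2 h)
        exact ⟨Sum.inl a, trivial, rfl⟩
      · obtain ⟨u, hu, hu'⟩ := hf2.2 b (i - k) (by simp only [Sum.elim_inr] at hi; omega)
        exact ⟨Sum.inr u, hu, by simp only [Sum.elim_inr]; omega⟩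

theorem grundy_add_le_grundy_join [Fintype α] [Fintype β] :
    grundy G1 + grundy G2 ≤ grundy (G1.join G2) := by
  obtain ⟨f1, hf1, h1⟩ := exists_isGrundyColoring_card_image_eq_grundy G1
  obtain ⟨f2, hf2, h2⟩ := exists_isGrundyColoring_card_image_eq_grundy G2
  refine le_trans ?_ (hf1.join_sumElim hf2).card_image_le_grundy
  rw [← h1, ← h2, ← card_range (_ + _)]
  refine card_le_card fun i hi => ?_
  rcases lt_or_ge i #(univ.image f1) with h | h
  · obtain ⟨a, -, rfl⟩ := mem_image.1 (hf1.mem_image_iff.2 h)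
    exact mem_image_of_mem _ (mem_univ (Sum.inl a))
  · have hi' : i - #(univ.image f1) < #(univ.image f2) := by rw [mem_range] at hi; omega
    obtain ⟨b, -, hb⟩ := mem_image.1 (hf2.mem_image_iff.2 hi')
    exact mem_image.2 ⟨Sum.inr b, mem_univ _, by simp only [Sum.elim_inr]; omega⟩

end Join

/-- the Grundy number of a join is the sum of the Grundy numbers. -/
theorem grundy_join {α β : Type*} [Fintype α] [Fintype β]
    (G1 : SimpleGraph α) (G2 : SimpleGraph β) :
    grundy (G1.join G2) = grundy G1 + grundy G2 :=
  grundy_join_le.antisymm grundy_add_le_grundy_join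
end

section
/- In a finite cograph, every maximal independent set intersects every maximal clique. -/
open SimpleGraph

/-!
Choose `u ∈ s` whose neighbourhood in `t` is maximal. Since `u ∉ t`, maximality of `t` gives
`b ∈ t` not adjacent to `u`, and maximality of `s` gives `u' ∈ s` adjacent to `b`. In a cograph
the traces on the clique `t` of the neighbourhoods of two non-adjacent vertices are nested
(otherwise `u - a - b - u'` is an induced `P₄`), so the trace of `u'` lies in that of `u`, which
contains `b` after all.
-/

section

variable {V : Type*} {G : SimpleGraph V} {W s t : Set V} {u v : V}

lemma IsMaxIndepOn.exists_adj_of_notMem (hs : IsMaxIndepOn G W s) (hv : v ∈ W) (hvs : v ∉ s) :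
    ∃ u ∈ s, G.Adj v u := by
  by_contra! h
  have hind : IsIndepOn G (insert v s) := by
    rintro x (rfl | hx) y (rfl | hy) hxy
    · exact G.loopless.irrefl _ hxy
    · exact h y hy hxy
    · exact h x hx hxy.symm
    · exact hs.2.1 x hx y hy hxy
  exact hvs (hs.2.2 _ (Set.subset_insert v s) (Set.insert_subset hv hs.1) hind ▸
    Set.mem_insert v s)

lemma IsMaxCliqueOn.exists_not_adj_of_notMem (ht : IsMaxCliqueOn G W t) (hv : v ∈ W)
    (hvt : v ∉ t) : ∃ u ∈ t, ¬ G.Adj v u := by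
  by_contra! h
  have hclique : G.IsClique (insert v t) := ht.2.1.insert fun u hu _ => h u hu
  exact hvt (ht.2.2 _ (Set.subset_insert v t) (Set.insert_subset hv ht.1) hclique ▸
    Set.mem_insert v t)

lemma IsCograph.adj_of_adj_of_adj_of_adj (hG : IsCograph G) {a b c d : V} (hab : G.Adj a b)
    (hbc : G.Adj b c) (hcd : G.Adj c d) (hac : ¬ G.Adj a c) (hbd : ¬ G.Adj b d) :
    G.Adj a d := by
  by_contra had
  refine hG ⟨⟨![a, b, c, d], ?_⟩, ?_⟩
  · intro i j hij
    fin_cases i <;> fin_cases j <;> simp_all [G.adj_comm]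
  · intro i j
    change G.Adj (![a, b, c, d] i) (![a, b, c, d] j) ↔ _
    fin_cases i <;> fin_cases j <;> simp [pathGraph_adj, G.adj_comm, *]

lemma IsCograph.neighborSet_inter_clique_total (hG : IsCograph G) (ht : G.IsClique t) {u' : V}
    (huu' : ¬ G.Adj u u') :
    G.neighborSet u ∩ t ⊆ G.neighborSet u' ∩ t ∨
      G.neighborSet u' ∩ t ⊆ G.neighborSet u ∩ t := by
  by_contra! h
  obtain ⟨⟨a, ⟨hua, hat⟩, hu'a⟩, ⟨b, ⟨hu'b, hbt⟩, hub⟩⟩ :=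
    And.imp Set.not_subset.mp Set.not_subset.mp h
  simp only [Set.mem_inter_iff, mem_neighborSet, not_and] at hu'a hub
  have hab : G.Adj a b := ht hat hbt fun hab => hub (hab ▸ hua) hbt
  exact huu' (hG.adj_of_adj_of_adj_of_adj hua hab hu'b.symm (fun h => hub h hbt)
    fun h => hu'a h.symm hat)

end

/-- in a finite cograph, every maximal independent set meets every
maximal clique. -/
theorem cograph_maxIndep_inter_maxClique {V : Type*} [Fintype V] [Nonempty V]
    (G : SimpleGraph V) (hG : IsCograph G) (s t : Set V)
    (hs : IsMaxIndepOn G Set.univ s) (ht : IsMaxCliqueOn G Set.univ t) :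
    (s ∩ t).Nonempty := by
  by_contra hst
  have hs_ne : s.Nonempty := by
    obtain ⟨v⟩ := ‹Nonempty V›
    by_contra! hs_empty
    obtain ⟨u, hu, -⟩ := hs.exists_adj_of_notMem (Set.mem_univ v) (by simp [hs_empty])
    simp [hs_empty] at hu
  obtain ⟨u, hus, humax⟩ :=
    s.toFinite.exists_maximalFor (fun u => G.neighborSet u ∩ t) s hs_ne
  obtain ⟨b, hbt, hub⟩ :=
    ht.exists_not_adj_of_notMem (Set.mem_univ u) fun hut => hst ⟨u, hus, hut⟩
  obtain ⟨u', hu's, hbu'⟩ :=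
    hs.exists_adj_of_notMem (Set.mem_univ b) fun hbs => hst ⟨b, hbs, hbt⟩
  have hnested : G.neighborSet u' ∩ t ⊆ G.neighborSet u ∩ t :=
    (hG.neighborSet_inter_clique_total ht.2.1 (hs.2.1 u hus u' hu's)).elim (humax hu's) id
  exact hub (hnested ⟨hbu'.symm, hbt⟩).1
end

section
/- A finite simple graph in which every maximal independent set intersects every maximal clique, and this property holds for all induced subgraphs, is a cograph. -/
open SimpleGraph

/-! An induced path `a - b - c - d` has, inside `{a, b, c, d}`, the maximal independent set
`{a, d}` and the disjoint maximal clique `{b, c}`. -/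

section MaximalOn

variable {V : Type*} {G : SimpleGraph V} {W C : Set V}

theorem isMaxIndepOn_of_dominating (hCW : C ⊆ W) (hC : IsIndepOn G C)
    (hdom : ∀ w ∈ W, w ∉ C → ∃ c ∈ C, G.Adj w c) : IsMaxIndepOn G W C := by
  refine ⟨hCW, hC, fun D hCD hDW hD => (Set.Subset.antisymm ?_ hCD)⟩
  intro x hxD
  by_contra hxC
  obtain ⟨c, hc, hxc⟩ := hdom x (hDW hxD) hxC
  exact hD x hxD c (hCD hc) hxc

theorem isMaxCliqueOn_of_codominating (hCW : C ⊆ W) (hC : G.IsClique C)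
    (hdom : ∀ w ∈ W, w ∉ C → ∃ c ∈ C, ¬ G.Adj w c) : IsMaxCliqueOn G W C := by
  refine ⟨hCW, hC, fun D hCD hDW hD => (Set.Subset.antisymm ?_ hCD)⟩
  intro x hxD
  by_contra hxC
  obtain ⟨c, hc, hxc⟩ := hdom x (hDW hxD) hxC
  exact hxc (hD hxD (hCD hc) (ne_of_mem_of_not_mem hc hxC).symm)

end MaximalOn

theorem HasInduced.exists_induced_path4 {V : Type*} {G : SimpleGraph V}
    (hP : HasInduced G (pathGraph 4)) :
    ∃ a b c d : V, G.Adj a b ∧ G.Adj b c ∧ G.Adj c d ∧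
      ¬ G.Adj a c ∧ ¬ G.Adj a d ∧ ¬ G.Adj b d := by
  obtain ⟨f, hf⟩ := hP
  refine ⟨f 0, f 1, f 2, f 3, ?_, ?_, ?_, ?_, ?_, ?_⟩ <;> simp [hf, pathGraph_adj]

theorem cograph_of_maxIndep_inter_maxClique_general {V : Type*} (G : SimpleGraph V)
    (h : ∀ W : Set V, W.Nonempty → ∀ s t : Set V,
      IsMaxIndepOn G W s → IsMaxCliqueOn G W t → (s ∩ t).Nonempty) :
    IsCograph G := by
  intro hP
  obtain ⟨a, b, c, d, hab, hbc, hcd, hac, had, hbd⟩ := hP.exists_induced_path4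
  have hac' : a ≠ c := by rintro rfl; exact had hcd
  have hbd' : b ≠ d := by rintro rfl; exact had hab
  have hs : IsMaxIndepOn G {a, b, c, d} {a, d} := by
    refine isMaxIndepOn_of_dominating (by simp [Set.insert_subset_iff]) ?_ ?_
    · rintro u (rfl | rfl) v (rfl | rfl) <;> simp_all [G.adj_comm]
    · rintro w (rfl | rfl | rfl | rfl) hw <;> simp_all [G.adj_comm]
  have ht : IsMaxCliqueOn G {a, b, c, d} {b, c} := by
    refine isMaxCliqueOn_of_codominating (by simp [Set.insert_subset_iff]) ?_ ?_
    · exact G.isClique_pair.mpr fun _ => hbc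
    · rintro w (rfl | rfl | rfl | rfl) hw <;> simp_all [G.adj_comm]
  obtain ⟨x, hxs, hxt⟩ := h _ (Set.insert_nonempty _ _) _ _ hs ht
  rcases hxs with rfl | rfl <;> rcases hxt with rfl | rfl
  exacts [hab.ne rfl, hac' rfl, hbd' rfl, hcd.ne rfl]

/-- if in every (nonempty) induced subgraph every maximal independent set
meets every maximal clique, then the graph is a cograph. -/
theorem cograph_of_maxIndep_inter_maxClique {V : Type*} [Fintype V] (G : SimpleGraph V)
    (h : ∀ W : Set V, W.Nonempty → ∀ s t : Set V,
      IsMaxIndepOn G W s → IsMaxCliqueOn G W t → (s ∩ t).Nonempty) :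
    IsCograph G :=
  cograph_of_maxIndep_inter_maxClique_general G h
end

section
/- Two graphs on the same vertex set are Seidel switching equivalent if and only if they have the same set of odd triples, where a triple of distinct vertices is odd if it spans an odd number of edges. -/
open SimpleGraph

/-!
Switching with respect to `S` is taking the symmetric difference with the cut graph
`seidelSwitch ⊥ S`, and a triple is odd in `G ∆ H` exactly when its parity differs in `G` and `H`.
So it suffices to show that a graph has no odd triples iff it is a cut graph. Such a graph is
the cut of the neighbourhood of any vertex `v`: evenness of the triple `{v, x, y}` says that
`x` and `y` are adjacent iff exactly one of them is adjacent to `v`.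
-/

open scoped symmDiff

section

variable {V : Type*}

theorem SimpleGraph.symmDiff_adj (G H : SimpleGraph V) (x y : V) :
    (G ∆ H).Adj x y ↔ ¬(G.Adj x y ↔ H.Adj x y) := by
  simp only [symmDiff, sup_adj, sdiff_adj]
  tauto

theorem oddTriple_iff (G : SimpleGraph V) (x y z : V) :
    OddTriple G x y z ↔ (G.Adj x y ↔ (G.Adj x z ↔ G.Adj y z)) := by
  unfold OddTriple edgeCount
  split_ifs <;> simp_all [Nat.odd_iff]

theorem oddTriple_symmDiff (G H : SimpleGraph V) (x y z : V) :
    OddTriple (G ∆ H) x y z ↔ ¬(OddTriple G x y z ↔ OddTriple H x y z) := by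
  simp only [oddTriple_iff, SimpleGraph.symmDiff_adj]
  tauto

theorem seidelSwitch_bot_adj (S : Set V) (x y : V) :
    (seidelSwitch ⊥ S).Adj x y ↔ x ≠ y ∧ ¬(x ∈ S ↔ y ∈ S) := by
  simp [seidelSwitch]

theorem seidelSwitch_eq_symmDiff (G : SimpleGraph V) (S : Set V) :
    seidelSwitch G S = G ∆ seidelSwitch ⊥ S := by
  ext x y
  rw [SimpleGraph.symmDiff_adj, seidelSwitch_bot_adj]
  obtain rfl | hxy := eq_or_ne x y
  · simp [seidelSwitch]
  · simp only [seidelSwitch, ne_eq, hxy, not_false_eq_true, true_and]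
    tauto

theorem eq_seidelSwitch_bot_neighborSet {D : SimpleGraph V}
    (hD : ∀ x y z : V, x ≠ y → x ≠ z → y ≠ z → ¬OddTriple D x y z) (v : V) :
    D = seidelSwitch ⊥ (D.neighborSet v) := by
  ext x y
  simp only [seidelSwitch_bot_adj, SimpleGraph.mem_neighborSet]
  obtain rfl | hxy := eq_or_ne x y
  · simp
  obtain rfl | hxv := eq_or_ne x v
  · simp [hxy]
  obtain rfl | hyv := eq_or_ne y v
  · simp [hxy, D.adj_comm]
  have heven := hD v x y hxv.symm hyv.symm hxy
  rw [oddTriple_iff] at heven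
  tauto

theorem exists_eq_seidelSwitch_bot_iff (D : SimpleGraph V) :
    (∃ S : Set V, D = seidelSwitch ⊥ S) ↔
      ∀ x y z : V, x ≠ y → x ≠ z → y ≠ z → ¬OddTriple D x y z := by
  refine ⟨?_, fun hD => ?_⟩
  · rintro ⟨S, rfl⟩ x y z hxy hxz hyz
    simp only [oddTriple_iff, seidelSwitch_bot_adj]
    tauto
  · cases isEmpty_or_nonempty V with
    | inl _ => exact ⟨∅, Subsingleton.elim _ _⟩
    | inr h => exact ⟨_, eq_seidelSwitch_bot_neighborSet hD h.some⟩

end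

theorem switchingEquivalent_iff_oddTriples_general {V : Type*} (G H : SimpleGraph V) :
    (∃ S : Set V, H = seidelSwitch G S) ↔
      ∀ x y z : V, x ≠ y → x ≠ z → y ≠ z →
        (OddTriple G x y z ↔ OddTriple H x y z) := by
  calc (∃ S : Set V, H = seidelSwitch G S)
      ↔ ∃ S : Set V, G ∆ H = seidelSwitch ⊥ S := by
        refine exists_congr fun S => ?_
        rw [seidelSwitch_eq_symmDiff, (symmDiff_right_involutive G).eq_iff]
    _ ↔ _ := by simp only [exists_eq_seidelSwitch_bot_iff, oddTriple_symmDiff, not_not]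

/-- two graphs on the same finite vertex set are switching equivalent iff
they have the same odd triples. -/
theorem switchingEquivalent_iff_oddTriples {V : Type*} [Fintype V] (G H : SimpleGraph V) :
    (∃ S : Set V, H = seidelSwitch G S) ↔
      ∀ x y z : V, x ≠ y → x ≠ z → y ≠ z →
        (OddTriple G x y z ↔ OddTriple H x y z) :=
  switchingEquivalent_iff_oddTriples_general G H
end

section
/- If every induced subgraph of a finite graph G on at least two vertices has two vertices forming a twin or an anti-twin, then G contains no induced C_5, bull, gem, or co-gem. -/
open SimpleGraph

/-!
Having a pair of twins or of anti-twins is a property of the induced subgraph, so it pulls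
back along induced embeddings, and it is invariant under complementation. The hypothesis
therefore forces such a pair in every induced copy of `C₅`, the bull, the gem or the co-gem,
whereas a finite check shows that none of the first three has one, and hence neither does
the co-gem, the complement of the gem.
-/

def HasTwinsOrAntiTwinsOn {V : Type*} (G : SimpleGraph V) (W : Set V) : Prop :=
  ∃ x ∈ W, ∃ y ∈ W, x ≠ y ∧ (TwinsOn G W x y ∨ AntiTwinsOn G W x y)

section InducedEmbedding

variable {V W : Type*} {G : SimpleGraph V} {H : SimpleGraph W} {f : W ↪ V}

theorem twinsOn_image_iff (hf : ∀ a b, G.Adj (f a) (f b) ↔ H.Adj a b) (S : Set W) (a b : W) :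
    TwinsOn G (f '' S) (f a) (f b) ↔ TwinsOn H S a b := by
  simp only [TwinsOn, Set.forall_mem_image, f.injective.ne_iff, hf]

theorem antiTwinsOn_image_iff (hf : ∀ a b, G.Adj (f a) (f b) ↔ H.Adj a b) (S : Set W)
    (a b : W) : AntiTwinsOn G (f '' S) (f a) (f b) ↔ AntiTwinsOn H S a b := by
  simp only [AntiTwinsOn, Set.forall_mem_image, f.injective.ne_iff, hf]

theorem hasTwinsOrAntiTwinsOn_image_iff (hf : ∀ a b, G.Adj (f a) (f b) ↔ H.Adj a b)
    (S : Set W) : HasTwinsOrAntiTwinsOn G (f '' S) ↔ HasTwinsOrAntiTwinsOn H S := by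
  simp only [HasTwinsOrAntiTwinsOn, Set.exists_mem_image, f.injective.ne_iff,
    twinsOn_image_iff hf, antiTwinsOn_image_iff hf]

end InducedEmbedding

theorem not_hasInduced_of_forall_hasTwinsOrAntiTwinsOn {V W : Type*} [Nontrivial W]
    {G : SimpleGraph V} (hG : ∀ S : Set V, S.Nontrivial → HasTwinsOrAntiTwinsOn G S)
    {H : SimpleGraph W} (hH : ¬ HasTwinsOrAntiTwinsOn H Set.univ) : ¬ HasInduced G H := by
  rintro ⟨f, hf⟩
  exact hH <| (hasTwinsOrAntiTwinsOn_image_iff hf _).1 <|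
    hG _ (Set.nontrivial_univ.image f.injective)

section Compl

variable {V : Type*} (G : SimpleGraph V) (W : Set V)

theorem twinsOn_compl_iff (x y : V) : TwinsOn Gᶜ W x y ↔ TwinsOn G W x y :=
  forall₄_congr fun z _ hzx hzy => by
    simp only [compl_adj, hzx.symm, hzy.symm, ne_eq, not_false_eq_true, true_and, not_iff_not]

theorem antiTwinsOn_compl_iff (x y : V) : AntiTwinsOn Gᶜ W x y ↔ AntiTwinsOn G W x y :=
  forall₄_congr fun z _ hzx hzy => by
    simp only [compl_adj, hzx.symm, hzy.symm, ne_eq, not_false_eq_true, true_and, not_not]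
    tauto

theorem hasTwinsOrAntiTwinsOn_compl_iff :
    HasTwinsOrAntiTwinsOn Gᶜ W ↔ HasTwinsOrAntiTwinsOn G W := by
  simp only [HasTwinsOrAntiTwinsOn, twinsOn_compl_iff, antiTwinsOn_compl_iff]

end Compl

theorem not_hasTwinsOrAntiTwinsOn_cycleGraph_five :
    ¬ HasTwinsOrAntiTwinsOn (cycleGraph 5) Set.univ := by
  simp only [HasTwinsOrAntiTwinsOn, TwinsOn, AntiTwinsOn, Set.mem_univ, true_and,
    forall_const]
  decide

instance : DecidableRel bull.Adj := inferInstanceAs (DecidableRel (fromRel _).Adj)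

instance : DecidableRel gem.Adj := inferInstanceAs (DecidableRel (fromRel _).Adj)

theorem not_hasTwinsOrAntiTwinsOn_bull : ¬ HasTwinsOrAntiTwinsOn bull Set.univ := by
  simp only [HasTwinsOrAntiTwinsOn, TwinsOn, AntiTwinsOn, Set.mem_univ, true_and,
    forall_const]
  decide

theorem not_hasTwinsOrAntiTwinsOn_gem : ¬ HasTwinsOrAntiTwinsOn gem Set.univ := by
  simp only [HasTwinsOrAntiTwinsOn, TwinsOn, AntiTwinsOn, Set.mem_univ, true_and,
    forall_const]
  decide

theorem no_C5_bull_gem_cogem_of_twins_general {V : Type*} (G : SimpleGraph V)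
    (h : ∀ W : Set V, (∃ a ∈ W, ∃ b ∈ W, a ≠ b) →
      ∃ x ∈ W, ∃ y ∈ W, x ≠ y ∧ (TwinsOn G W x y ∨ AntiTwinsOn G W x y)) :
    ¬ HasInduced G (cycleGraph 5) ∧ ¬ HasInduced G bull ∧
      ¬ HasInduced G gem ∧ ¬ HasInduced G gemᶜ := by
  have no_induced {H : SimpleGraph (Fin 5)} :
      ¬ HasTwinsOrAntiTwinsOn H Set.univ → ¬ HasInduced G H :=
    not_hasInduced_of_forall_hasTwinsOrAntiTwinsOn h
  exact ⟨no_induced not_hasTwinsOrAntiTwinsOn_cycleGraph_five,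
    no_induced not_hasTwinsOrAntiTwinsOn_bull, no_induced not_hasTwinsOrAntiTwinsOn_gem,
    no_induced ((hasTwinsOrAntiTwinsOn_compl_iff _ _).not.2 not_hasTwinsOrAntiTwinsOn_gem)⟩

/-- if every induced subgraph on at least two vertices has a twin or an
anti-twin, then the graph has no induced `C₅`, bull, gem or co-gem. -/
theorem no_C5_bull_gem_cogem_of_twins {V : Type*} [Fintype V] (G : SimpleGraph V)
    (h : ∀ W : Set V, (∃ a ∈ W, ∃ b ∈ W, a ≠ b) →
      ∃ x ∈ W, ∃ y ∈ W, x ≠ y ∧ (TwinsOn G W x y ∨ AntiTwinsOn G W x y)) :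
    ¬ HasInduced G (cycleGraph 5) ∧ ¬ HasInduced G bull ∧
      ¬ HasInduced G gem ∧ ¬ HasInduced G gemᶜ :=
  no_C5_bull_gem_cogem_of_twins_general G h
end
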